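/- arXiv:1507.07750 — 2 statements merged into one kernel-verified Lean document; each statement's English description precedes it below -/
import Mathlib

section
/- Let $a \in (0,1)$ and $\boldsymbol{\tau} \in \mathbb{R}^2$. Suppose $X_1$ and $X_2$ are two nonnegative bounded-in-time solutions of the recursion $X(t,\mathbf{x}) = \max(a X(t-1, \mathbf{x} - \boldsymbol{\tau}), (1-a) Z(t, \mathbf{x}))$ for $t \in \mathbb{Z}$, $\mathbf{x} \in \mathbb{R}^2$, with the same innovations $Z$, and suppose $\sup_{t \le T, } \max(X_1(t,\mathbf{x} - (T-t)\boldsymbol{\tau}), X_2(t, \mathbf{x} - (T-t)\boldsymbol{\tau})) < \infty$ for each $(T,\mathbf{x})$. Then $X_1 = X_2$. -/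
/-- Uniqueness of nonnegative solutions of the spatial MARMA(1,0) recursion
`X(t,x) = max(a X(t-1, x-τ), (1-a) Z(t,x))` that are bounded along the past
trajectories `t ↦ x - (T-t)τ`, `t ≤ T`. -/
theorem marma_recursion_unique_solution
    (a : ℝ) (ha : a ∈ Set.Ioo (0 : ℝ) 1) (τ : Fin 2 → ℝ)
    (Z X₁ X₂ : ℤ → (Fin 2 → ℝ) → ℝ)
    (hX₁nonneg : ∀ t x, 0 ≤ X₁ t x) (hX₂nonneg : ∀ t x, 0 ≤ X₂ t x)
    (hX₁ : ∀ (t : ℤ) (x : Fin 2 → ℝ),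
      X₁ t x = max (a * X₁ (t - 1) (x - τ)) ((1 - a) * Z t x))
    (hX₂ : ∀ (t : ℤ) (x : Fin 2 → ℝ),
      X₂ t x = max (a * X₂ (t - 1) (x - τ)) ((1 - a) * Z t x))
    (hbdd : ∀ (T : ℤ) (x : Fin 2 → ℝ), ∃ C : ℝ, ∀ t : ℤ, t ≤ T →
      max (X₁ t (x - ((T - t : ℤ) : ℝ) • τ)) (X₂ t (x - ((T - t : ℤ) : ℝ) • τ)) ≤ C) :
    X₁ = X₂ := by
  obtain ⟨ha0, ha1⟩ := ha
  -- one-step contraction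
  have hstep : ∀ (t : ℤ) (x : Fin 2 → ℝ),
      |X₁ t x - X₂ t x| ≤ a * |X₁ (t - 1) (x - τ) - X₂ (t - 1) (x - τ)| := by
    intro t x
    rw [hX₁ t x, hX₂ t x]
    calc |max (a * X₁ (t-1) (x-τ)) ((1-a) * Z t x)
            - max (a * X₂ (t-1) (x-τ)) ((1-a) * Z t x)|
        ≤ max |a * X₁ (t-1) (x-τ) - a * X₂ (t-1) (x-τ)| |(1-a)*Z t x - (1-a)*Z t x| :=
          abs_max_sub_max_le_max _ _ _ _
      _ ≤ a * |X₁ (t-1) (x-τ) - X₂ (t-1) (x-τ)| := by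
          rw [sub_self, abs_zero, ← mul_sub, abs_mul, abs_of_pos ha0]
          exact max_le le_rfl (by positivity)
  -- iterated contraction
  have hiter : ∀ (n : ℕ) (t : ℤ) (x : Fin 2 → ℝ),
      |X₁ t x - X₂ t x| ≤
        a ^ n * |X₁ (t - n) (x - (n : ℝ) • τ) - X₂ (t - n) (x - (n : ℝ) • τ)| := by
    intro n
    induction n with
    | zero => intro t x; simp
    | succ n ih =>
      intro t x
      calc |X₁ t x - X₂ t x|
          ≤ a * |X₁ (t - 1) (x - τ) - X₂ (t - 1) (x - τ)| := hstep t x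
        _ ≤ a * (a ^ n *
            |X₁ (t - 1 - n) (x - τ - (n : ℝ) • τ) - X₂ (t - 1 - n) (x - τ - (n : ℝ) • τ)|) :=
            mul_le_mul_of_nonneg_left (ih (t - 1) (x - τ)) ha0.le
        _ = a ^ (n + 1) *
            |X₁ (t - (n + 1 : ℕ)) (x - ((n + 1 : ℕ) : ℝ) • τ)
              - X₂ (t - (n + 1 : ℕ)) (x - ((n + 1 : ℕ) : ℝ) • τ)| := by
            have h1 : t - 1 - (n : ℤ) = t - ((n + 1 : ℕ) : ℤ) := by push_cast; ring
            have h2 : x - τ - (n : ℝ) • τ = x - ((n + 1 : ℕ) : ℝ) • τ := by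
              push_cast
              ext i
              simp [Pi.sub_apply, Pi.smul_apply, smul_eq_mul]
              ring
            rw [h1, h2, pow_succ, ← mul_assoc, mul_comm (a ^ n) a]
  funext t x
  obtain ⟨C, hC⟩ := hbdd t x
  have hbound : ∀ n : ℕ, |X₁ t x - X₂ t x| ≤ a ^ n * C := by
    intro n
    have ht : t - (n : ℤ) ≤ t := by omega
    have := hC (t - n) ht
    have heq : x - ((t - (t - (n : ℤ)) : ℤ) : ℝ) • τ = x - (n : ℝ) • τ := by
      norm_num
    rw [heq] at this
    have h1 : X₁ (t - n) (x - (n : ℝ) • τ) ≤ C := le_trans (le_max_left _ _) this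
    have h2 : X₂ (t - n) (x - (n : ℝ) • τ) ≤ C := le_trans (le_max_right _ _) this
    have habs : |X₁ (t - n) (x - (n : ℝ) • τ) - X₂ (t - n) (x - (n : ℝ) • τ)| ≤ C := by
      rw [abs_sub_le_iff]
      constructor
      · linarith [hX₂nonneg (t - n) (x - (n : ℝ) • τ)]
      · linarith [hX₁nonneg (t - n) (x - (n : ℝ) • τ)]
    exact le_trans (hiter n t x) (mul_le_mul_of_nonneg_left habs (pow_nonneg ha0.le n))
  have htend : Filter.Tendsto (fun n : ℕ => a ^ n * C) Filter.atTop (nhds 0) := by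
    simpa using (tendsto_pow_atTop_nhds_zero_of_lt_one ha0.le ha1).mul_const C
  have : |X₁ t x - X₂ t x| ≤ 0 :=
    ge_of_tendsto htend (Filter.Eventually.of_forall hbound)
  have := abs_nonpos_iff.mp this
  linarith [this]
end

section
/- Let $(X_1, X_2)$ be a bivariate random vector with standard Fréchet margins ($\mathbb{P}(X_i \le z) = \Phi_1(z) := \exp(-1/z)$ for $z>0$) satisfying $\mathbb{P}(X_1 \le u, X_2 \le u) = \exp(-\theta/u)$ for all $u > 0$ with $\theta \in [1,2]$. Then the $\Phi_1$-madogram $\nu = \frac{1}{2}\mathbb{E}|\Phi_1(X_1) - \Phi_1(X_2)|$ satisfies $\nu = \frac{1}{2}\cdot\frac{\theta-1}{\theta+1} = \frac{1}{2} - \frac{1}{\theta+1}$. -/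
open MeasureTheory
open scoped ENNReal

lemma frechet_exp_le_iff {x t : ℝ} (hx : 0 < x) (ht0 : 0 < t) (ht1 : t < 1) :
    Real.exp (-1 / x) ≤ t ↔ x ≤ -1 / Real.log t := by
  have hlt : Real.log t < 0 := Real.log_neg ht0 ht1
  have h1 : Real.exp (-1 / x) ≤ t ↔ -1 / x ≤ Real.log t := by
    have := Real.exp_le_exp (x := -1 / x) (y := Real.log t)
    rwa [Real.exp_log ht0] at this
  rw [h1, div_le_iff₀ hx, le_div_iff_of_neg hlt, mul_comm]

/-- Generic expectation computation: if `Y ∈ (0,1)` a.s. with CDF `t ^ c` on `(0,1)`,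
then `E Y = c / (c+1)`. -/
lemma expectation_of_power_cdf {Ω : Type*} [MeasurableSpace Ω] (μ : Measure Ω)
    [IsProbabilityMeasure μ] (Y : Ω → ℝ) (c : ℝ) (hc : 1 ≤ c) (hYm : Measurable Y)
    (hbd : ∀ᵐ ω ∂μ, Y ω ∈ Set.Ioo (0:ℝ) 1)
    (hcdf : ∀ t ∈ Set.Ioo (0:ℝ) 1, μ {ω | Y ω ≤ t} = ENNReal.ofReal (t ^ c)) :
    ∫ ω, Y ω ∂μ = c / (c + 1) := by
  have hnn : 0 ≤ᵐ[μ] Y := hbd.mono fun ω h => h.1.le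
  have hub : Y ≤ᵐ[μ] fun _ => (1:ℝ) := hbd.mono fun ω h => h.2.le
  have hint : Integrable Y μ := by
    refine (integrable_const (1:ℝ)).mono' hYm.aestronglyMeasurable ?_
    filter_upwards [hbd] with ω h
    rw [Real.norm_eq_abs, abs_of_pos h.1]; exact h.2.le
  rw [hint.integral_eq_integral_Ioc_meas_le hnn hub, integral_Ioc_eq_integral_Ioo]
  have hcong : ∫ t in Set.Ioo (0:ℝ) 1, (μ {ω | t ≤ Y ω}).toReal
      = ∫ t in Set.Ioo (0:ℝ) 1, (1 - t ^ c) := by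
    apply integral_congr_ae
    have h1 := meas_le_ae_eq_meas_lt μ (volume.restrict (Set.Ioo (0:ℝ) 1)) Y
    have h2 : ∀ᵐ t ∂(volume.restrict (Set.Ioo (0:ℝ) 1)), t ∈ Set.Ioo (0:ℝ) 1 :=
      ae_restrict_mem measurableSet_Ioo
    filter_upwards [h1, h2] with t h1t h2t
    have hms : MeasurableSet {ω | Y ω ≤ t} := hYm measurableSet_Iic
    have hlt : μ {ω | t < Y ω} = 1 - ENNReal.ofReal (t ^ c) := by
      have : {ω | t < Y ω} = {ω | Y ω ≤ t}ᶜ := by ext ω; simp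
      rw [this, measure_compl hms (measure_ne_top μ _), hcdf t h2t, measure_univ]
    have hle1 : t ^ c ≤ 1 := Real.rpow_le_one h2t.1.le h2t.2.le (by linarith)
    have hnn' : (0:ℝ) ≤ t ^ c := Real.rpow_nonneg h2t.1.le c
    rw [h1t, hlt, ENNReal.toReal_sub_of_le (by simpa using hle1) ENNReal.one_ne_top]
    simp [ENNReal.toReal_ofReal hnn']
  rw [show (∫ t in Set.Ioo (0:ℝ) 1, μ.real {a | t ≤ Y a}) = ∫ t in Set.Ioo (0:ℝ) 1, (μ {ω | t ≤ Y ω}).toReal from rfl]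
  rw [hcong, ← integral_Ioc_eq_integral_Ioo,
    ← intervalIntegral.integral_of_le (by norm_num : (0:ℝ) ≤ 1)]
  have hii : IntervalIntegrable (fun t : ℝ => t ^ c) volume 0 1 :=
    intervalIntegral.intervalIntegrable_rpow (Or.inl (by linarith))
  rw [intervalIntegral.integral_sub intervalIntegrable_const hii,
    integral_rpow (Or.inl (by linarith : (-1:ℝ) < c))]
  have hc1 : c + 1 ≠ 0 := by linarith
  rw [Real.one_rpow, Real.zero_rpow hc1]
  simp only [intervalIntegral.integral_const, smul_eq_mul, mul_one, sub_zero]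
  field_simp
  ring

/-- The `Φ₁`-madogram of a bivariate vector with standard Fréchet margins and
extremal coefficient `θ` equals `(θ-1)/(2(θ+1)) = 1/2 - 1/(θ+1)`. -/
theorem madogram_extremal_coefficient_link
    {Ω : Type*} [MeasurableSpace Ω] (μ : Measure Ω) [IsProbabilityMeasure μ]
    (X₁ X₂ : Ω → ℝ) (hX₁ : Measurable X₁) (hX₂ : Measurable X₂)
    (hpos : ∀ᵐ ω ∂μ, 0 < X₁ ω ∧ 0 < X₂ ω)
    (hmargin₁ : ∀ z : ℝ, 0 < z → μ {ω | X₁ ω ≤ z} = ENNReal.ofReal (Real.exp (-1 / z)))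
    (hmargin₂ : ∀ z : ℝ, 0 < z → μ {ω | X₂ ω ≤ z} = ENNReal.ofReal (Real.exp (-1 / z)))
    (θ : ℝ) (hθ : θ ∈ Set.Icc (1 : ℝ) 2)
    (hjoint : ∀ u : ℝ, 0 < u →
      μ {ω | X₁ ω ≤ u ∧ X₂ ω ≤ u} = ENNReal.ofReal (Real.exp (-θ / u)))
    (ν : ℝ)
    (hν : ν = (1 / 2) * ∫ ω, |Real.exp (-1 / X₁ ω) - Real.exp (-1 / X₂ ω)| ∂μ) :
    ν = (1 / 2) * ((θ - 1) / (θ + 1)) ∧ ν = 1 / 2 - 1 / (θ + 1) := by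
  obtain ⟨hθ1, hθ2⟩ := hθ
  set Y₁ : Ω → ℝ := fun ω => Real.exp (-1 / X₁ ω) with hY₁def
  set Y₂ : Ω → ℝ := fun ω => Real.exp (-1 / X₂ ω) with hY₂def
  have hY₁m : Measurable Y₁ := (measurable_const.div hX₁).exp
  have hY₂m : Measurable Y₂ := (measurable_const.div hX₂).exp
  have hbd₁ : ∀ᵐ ω ∂μ, Y₁ ω ∈ Set.Ioo (0:ℝ) 1 := by
    filter_upwards [hpos] with ω h
    exact ⟨Real.exp_pos _, Real.exp_lt_one_iff.mpr (div_neg_of_neg_of_pos (by norm_num) h.1)⟩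
  have hbd₂ : ∀ᵐ ω ∂μ, Y₂ ω ∈ Set.Ioo (0:ℝ) 1 := by
    filter_upwards [hpos] with ω h
    exact ⟨Real.exp_pos _, Real.exp_lt_one_iff.mpr (div_neg_of_neg_of_pos (by norm_num) h.2)⟩
  -- CDF of Y₁, Y₂ and of the max on (0,1)
  have hz : ∀ t ∈ Set.Ioo (0:ℝ) 1, 0 < -1 / Real.log t := by
    intro t ht
    have h := Real.log_neg ht.1 ht.2
    exact div_pos_of_neg_of_neg (by norm_num) h
  have hcdf₁ : ∀ t ∈ Set.Ioo (0:ℝ) 1, μ {ω | Y₁ ω ≤ t} = ENNReal.ofReal (t ^ (1:ℝ)) := by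
    intro t ht
    set z : ℝ := -1 / Real.log t with hzdef
    have hz0 : 0 < z := hz t ht
    have hae : {ω | Y₁ ω ≤ t} =ᵐ[μ] {ω | X₁ ω ≤ z} := by
      filter_upwards [hpos] with ω h
      simp only [Set.mem_setOf_eq, eq_iff_iff]
      exact frechet_exp_le_iff h.1 ht.1 ht.2
    rw [measure_congr hae, hmargin₁ z hz0]
    congr 1
    have hlog : Real.log t ≠ 0 := (Real.log_neg ht.1 ht.2).ne
    have : -1 / z = Real.log t := by rw [hzdef]; field_simp
    rw [this, Real.exp_log ht.1, Real.rpow_one]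
  have hcdf₂ : ∀ t ∈ Set.Ioo (0:ℝ) 1, μ {ω | Y₂ ω ≤ t} = ENNReal.ofReal (t ^ (1:ℝ)) := by
    intro t ht
    set z : ℝ := -1 / Real.log t with hzdef
    have hz0 : 0 < z := hz t ht
    have hae : {ω | Y₂ ω ≤ t} =ᵐ[μ] {ω | X₂ ω ≤ z} := by
      filter_upwards [hpos] with ω h
      simp only [Set.mem_setOf_eq, eq_iff_iff]
      exact frechet_exp_le_iff h.2 ht.1 ht.2
    rw [measure_congr hae, hmargin₂ z hz0]
    congr 1
    have hlog : Real.log t ≠ 0 := (Real.log_neg ht.1 ht.2).ne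
    have : -1 / z = Real.log t := by rw [hzdef]; field_simp
    rw [this, Real.exp_log ht.1, Real.rpow_one]
  set M : Ω → ℝ := fun ω => max (Y₁ ω) (Y₂ ω) with hMdef
  have hMm : Measurable M := hY₁m.max hY₂m
  have hbdM : ∀ᵐ ω ∂μ, M ω ∈ Set.Ioo (0:ℝ) 1 := by
    filter_upwards [hbd₁, hbd₂] with ω h1 h2
    exact ⟨lt_max_of_lt_left h1.1, max_lt h1.2 h2.2⟩
  have hcdfM : ∀ t ∈ Set.Ioo (0:ℝ) 1, μ {ω | M ω ≤ t} = ENNReal.ofReal (t ^ θ) := by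
    intro t ht
    set z : ℝ := -1 / Real.log t with hzdef
    have hz0 : 0 < z := hz t ht
    have hae : {ω | M ω ≤ t} =ᵐ[μ] {ω | X₁ ω ≤ z ∧ X₂ ω ≤ z} := by
      filter_upwards [hpos] with ω h
      simp only [Set.mem_setOf_eq, eq_iff_iff, hMdef, max_le_iff]
      show (Y₁ ω ≤ t ∧ Y₂ ω ≤ t) ↔ (X₁ ω ≤ z ∧ X₂ ω ≤ z)
      exact and_congr (frechet_exp_le_iff h.1 ht.1 ht.2) (frechet_exp_le_iff h.2 ht.1 ht.2)
    rw [measure_congr hae, hjoint z hz0]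
    congr 1
    have hlog : Real.log t ≠ 0 := (Real.log_neg ht.1 ht.2).ne
    have h1 : -θ / z = θ * Real.log t := by
      rw [hzdef, div_div_eq_mul_div]; ring
    rw [h1, Real.rpow_def_of_pos ht.1, mul_comm]
  -- expectations
  have hE₁ : ∫ ω, Y₁ ω ∂μ = 1 / 2 := by
    have := expectation_of_power_cdf μ Y₁ 1 le_rfl hY₁m hbd₁ hcdf₁
    norm_num at this ⊢; linarith
  have hE₂ : ∫ ω, Y₂ ω ∂μ = 1 / 2 := by
    have := expectation_of_power_cdf μ Y₂ 1 le_rfl hY₂m hbd₂ hcdf₂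
    norm_num at this ⊢; linarith
  have hEM : ∫ ω, M ω ∂μ = θ / (θ + 1) :=
    expectation_of_power_cdf μ M θ hθ1 hMm hbdM hcdfM
  -- integrability
  have hint : ∀ (Y : Ω → ℝ), Measurable Y → (∀ᵐ ω ∂μ, Y ω ∈ Set.Ioo (0:ℝ) 1) →
      Integrable Y μ := by
    intro Y hYm hbd
    refine (integrable_const (1:ℝ)).mono' hYm.aestronglyMeasurable ?_
    filter_upwards [hbd] with ω h
    rw [Real.norm_eq_abs, abs_of_pos h.1]; exact h.2.le
  have hint₁ : Integrable Y₁ μ := hint Y₁ hY₁m hbd₁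
  have hint₂ : Integrable Y₂ μ := hint Y₂ hY₂m hbd₂
  have hintM : Integrable M μ := hint M hMm hbdM
  -- |a - b| = 2 max a b - a - b
  have habs : (fun ω => |Y₁ ω - Y₂ ω|) = fun ω => 2 * M ω - Y₁ ω - Y₂ ω := by
    funext ω
    rcases le_total (Y₁ ω) (Y₂ ω) with h | h
    · rw [abs_of_nonpos (by linarith), hMdef]; simp [max_eq_right h]; ring
    · rw [abs_of_nonneg (by linarith), hMdef]; simp [max_eq_left h]; ring
  have hI : ∫ ω, |Y₁ ω - Y₂ ω| ∂μ = (θ - 1) / (θ + 1) := by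
    rw [habs]
    have h2M : Integrable (fun ω => 2 * M ω) μ := hintM.const_mul 2
    have e1 : ∫ ω, (2 * M ω - Y₁ ω - Y₂ ω) ∂μ
        = (∫ ω, (2 * M ω - Y₁ ω) ∂μ) - ∫ ω, Y₂ ω ∂μ := integral_sub (h2M.sub hint₁) hint₂
    have e2 : ∫ ω, (2 * M ω - Y₁ ω) ∂μ = (∫ ω, 2 * M ω ∂μ) - ∫ ω, Y₁ ω ∂μ :=
      integral_sub h2M hint₁
    have e3 : ∫ ω, 2 * M ω ∂μ = 2 * ∫ ω, M ω ∂μ := integral_const_mul 2 M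
    rw [e1, e2, e3, hE₁, hE₂, hEM]
    have hθ0 : θ + 1 ≠ 0 := by linarith
    field_simp
    ring
  have hθ0 : θ + 1 ≠ 0 := by linarith
  have hν' : ν = (1 / 2) * ((θ - 1) / (θ + 1)) := by rw [hν, hI]
  exact ⟨hν', by rw [hν']; field_simp; ring⟩
end
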